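/- arXiv:0902.4197 — 8 statements merged into one kernel-verified Lean document; each statement's English description precedes it below -/
import Mathlib

section
/- Let (T, C, ψ) be a weak entwining structure on a category 𝒞. Then for every object A of 𝒞 the following equality of morphisms T T C A → C T A holds: C(ε_{T A}) ∘ C(ψ_A) ∘ C(μ_{C A}) ∘ ψ_{T C A} ∘ T(ψ_{C A}) ∘ T T(δ_A) = ψ_A ∘ μ_{C A}. (This says that the multiplication μ of T is a 2-cell (t,ψ)(t,ψ) ⇒ (t,ψ) in the extended 2-category Cmd^π of comonads.) -/
open CategoryTheory

/-- A weak entwining structure on a category `𝒞`, consisting of a monad `T`, a comonad `G`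
and a natural transformation `ψ : T ∘ G ⟶ G ∘ T` satisfying the four weak entwining axioms
of Caenepeel and De Groot. -/
structure WeakEntwining {𝒞 : Type*} [Category 𝒞] (T : Monad 𝒞) (G : Comonad 𝒞) where
  /-- the entwining natural transformation, with components `T (G A) ⟶ G (T A)` -/
  ψ : (G.toFunctor ⋙ T.toFunctor : 𝒞 ⥤ 𝒞) ⟶ (T.toFunctor ⋙ G.toFunctor : 𝒞 ⥤ 𝒞)
  /-- (W1) `ψ_A ∘ μ_{C A} = C(μ_A) ∘ ψ_{T A} ∘ T(ψ_A)` -/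
  w1 : ∀ A : 𝒞, T.μ.app (G.obj A) ≫ ψ.app A =
      T.map (ψ.app A) ≫ ψ.app (T.obj A) ≫ G.map (T.μ.app A)
  /-- (W2) `δ_{T A} ∘ ψ_A = C(ψ_A) ∘ ψ_{C A} ∘ T(δ_A)` -/
  w2 : ∀ A : 𝒞, ψ.app A ≫ G.δ.app (T.obj A) =
      T.map (G.δ.app A) ≫ ψ.app (G.obj A) ≫ G.map (ψ.app A)
  /-- (W3) `ψ_A ∘ η_{C A} = C(ε_{T A}) ∘ C(ψ_A) ∘ C(η_{C A}) ∘ δ_A` -/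
  w3 : ∀ A : 𝒞, T.η.app (G.obj A) ≫ ψ.app A =
      G.δ.app A ≫ G.map (T.η.app (G.obj A)) ≫ G.map (ψ.app A) ≫ G.map (G.ε.app (T.obj A))
  /-- (W4) `ε_{T A} ∘ ψ_A = μ_A ∘ T(ε_{T A}) ∘ T(ψ_A) ∘ T(η_{C A})` -/
  w4 : ∀ A : 𝒞, ψ.app A ≫ G.ε.app (T.obj A) =
      T.map (T.η.app (G.obj A)) ≫ T.map (ψ.app A) ≫ T.map (G.ε.app (T.obj A)) ≫ T.μ.app A

/-! Put `ψ₂ := ψ_T ∘ Tψ : TTC ⟶ CTT`. Axiom (W1) says `ψ ∘ μ_C = Cμ ∘ ψ₂`, and (W2), used once at `A`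
and once at `TA` together with naturality of `ψ`, says that `ψ₂` is again compatible with `δ`.
Substituting both, the left-hand side becomes `C(ε_T ∘ Cμ) ∘ δ_{TT} ∘ ψ₂`, which the counit law
collapses to `Cμ ∘ ψ₂ = ψ ∘ μ_C`. -/

lemma CategoryTheory.Comonad.delta_comp_map_map_comp_counit {𝒞 : Type*} [Category 𝒞] (G : Comonad 𝒞)
    {X Y : 𝒞} (g : X ⟶ Y) : G.δ.app X ≫ G.map (G.map g ≫ G.ε.app Y) = G.map g := by
  rw [G.counit_naturality, G.map_comp, ← Category.assoc, Comonad.right_counit, Category.id_comp]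

namespace WeakEntwining

variable {𝒞 : Type*} [Category 𝒞] {T : Monad 𝒞} {G : Comonad 𝒞} (w : WeakEntwining T G)

def ψ₂ (A : 𝒞) : T.obj (T.obj (G.obj A)) ⟶ G.obj (T.obj (T.obj A)) :=
  T.map (w.ψ.app A) ≫ w.ψ.app (T.obj A)

lemma mu_comp_ψ (A : 𝒞) : T.μ.app (G.obj A) ≫ w.ψ.app A = w.ψ₂ A ≫ G.map (T.μ.app A) := by
  rw [w.w1, ψ₂, Category.assoc]

lemma ψ₂_comp_delta (A : 𝒞) :
    w.ψ₂ A ≫ G.δ.app (T.obj (T.obj A)) =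
      T.map (T.map (G.δ.app A)) ≫ w.ψ₂ (G.obj A) ≫ G.map (w.ψ₂ A) := by
  have natψ : T.map (G.map (w.ψ.app A)) ≫ w.ψ.app (G.obj (T.obj A)) =
      w.ψ.app (T.obj (G.obj A)) ≫ G.map (T.map (w.ψ.app A)) := w.ψ.naturality (w.ψ.app A)
  calc w.ψ₂ A ≫ G.δ.app (T.obj (T.obj A))
      = T.map (w.ψ.app A ≫ G.δ.app (T.obj A)) ≫ w.ψ.app (G.obj (T.obj A)) ≫
          G.map (w.ψ.app (T.obj A)) := by
          rw [ψ₂, Category.assoc, w.w2, T.map_comp, Category.assoc]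
    _ = T.map (T.map (G.δ.app A)) ≫ T.map (w.ψ.app (G.obj A)) ≫
          (T.map (G.map (w.ψ.app A)) ≫ w.ψ.app (G.obj (T.obj A))) ≫
          G.map (w.ψ.app (T.obj A)) := by
          rw [w.w2]; simp only [T.map_comp, Category.assoc]
    _ = T.map (T.map (G.δ.app A)) ≫ w.ψ₂ (G.obj A) ≫ G.map (w.ψ₂ A) := by
          simp only [natψ, ψ₂, G.map_comp, Category.assoc]

end WeakEntwining

/-- For a weak entwining structure, the multiplication `μ` of the monad is a 2-cell
`(t,ψ)(t,ψ) ⇒ (t,ψ)` in the extended 2-category `Cmd^π` of comonads: for every object `A`,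
`C(ε_{T A}) ∘ C(ψ_A) ∘ C(μ_{C A}) ∘ ψ_{T C A} ∘ T(ψ_{C A}) ∘ T T(δ_A) = ψ_A ∘ μ_{C A}`
as morphisms `T T C A ⟶ C T A`. -/
theorem weakEntwining_mul_two_cell {𝒞 : Type*} [Category 𝒞] (T : Monad 𝒞) (G : Comonad 𝒞)
    (w : WeakEntwining T G) (A : 𝒞) :
    T.map (T.map (G.δ.app A)) ≫ T.map (w.ψ.app (G.obj A)) ≫ w.ψ.app (T.obj (G.obj A)) ≫
        G.map (T.μ.app (G.obj A)) ≫ G.map (w.ψ.app A) ≫ G.map (G.ε.app (T.obj A)) =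
      T.μ.app (G.obj A) ≫ w.ψ.app A := by
  calc _ = T.map (T.map (G.δ.app A)) ≫ w.ψ₂ (G.obj A) ≫
          G.map (T.μ.app (G.obj A) ≫ w.ψ.app A) ≫ G.map (G.ε.app (T.obj A)) := by
        simp only [WeakEntwining.ψ₂, G.map_comp, Category.assoc]
    _ = w.ψ₂ A ≫ G.δ.app (T.obj (T.obj A)) ≫
          G.map (G.map (T.μ.app A) ≫ G.ε.app (T.obj A)) := by
        simp only [w.mu_comp_ψ, G.map_comp, ← Category.assoc, w.ψ₂_comp_delta]
    _ = T.μ.app (G.obj A) ≫ w.ψ.app A := by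
        rw [G.delta_comp_map_map_comp_counit, w.mu_comp_ψ]
end

section
/- Let (T, C, ψ) be a weak entwining structure on a category 𝒞. Then for every object A of 𝒞 the following equality of morphisms T C A → C C T A holds: C C(μ_A) ∘ C(ψ_{T A}) ∘ ψ_{C T A} ∘ T(δ_{T A}) ∘ T(ψ_A) ∘ T(η_{C A}) = δ_{T A} ∘ ψ_A. (This says that the comultiplication δ of C is a 2-cell (c,ψ) ⇒ (c,ψ)(c,ψ) in the extended 2-category Mnd^ι of monads.) -/
/-!
(W2) at `T A` turns `T(δ_{T A})` followed by `ψ` into `ψ_{T A}` followed by `δ`, and naturality of `δ`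
moves it past `C(μ_A)`. What is left in front of `δ_{T A}` is `C(μ_A) ∘ ψ_{T A} ∘ T(ψ_A) ∘ T(η_{C A})`,
which (W1) and the unit law `μ ∘ T η = 1` reduce to `ψ_A`.
-/

open CategoryTheory

namespace WeakEntwining

variable {𝒞 : Type*} [Category 𝒞] {T : Monad 𝒞} {G : Comonad 𝒞}

theorem map_η_comp_map_ψ_comp_ψ_comp_map_μ (w : WeakEntwining T G) (A : 𝒞) :
    T.map (T.η.app (G.obj A)) ≫ T.map (w.ψ.app A) ≫ w.ψ.app (T.obj A) ≫ G.map (T.μ.app A) =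
      w.ψ.app A := by
  rw [← w.w1, ← Category.assoc, T.right_unit, Category.id_comp]

end WeakEntwining

/-- For a weak entwining structure, the comultiplication `δ` of the comonad is a 2-cell
`(c,ψ) ⇒ (c,ψ)(c,ψ)` in the extended 2-category `Mnd^ι` of monads: for every object `A`,
`C C(μ_A) ∘ C(ψ_{T A}) ∘ ψ_{C T A} ∘ T(δ_{T A}) ∘ T(ψ_A) ∘ T(η_{C A}) = δ_{T A} ∘ ψ_A`
as morphisms `T C A ⟶ C C T A`. -/
theorem weakEntwining_comul_two_cell {𝒞 : Type*} [Category 𝒞] (T : Monad 𝒞) (G : Comonad 𝒞)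
    (w : WeakEntwining T G) (A : 𝒞) :
    T.map (T.η.app (G.obj A)) ≫ T.map (w.ψ.app A) ≫ T.map (G.δ.app (T.obj A)) ≫
        w.ψ.app (G.obj (T.obj A)) ≫ G.map (w.ψ.app (T.obj A)) ≫ G.map (G.map (T.μ.app A)) =
      w.ψ.app A ≫ G.δ.app (T.obj A) := by
  rw [← reassoc_of% w.w2 (T.obj A), ← Functor.comp_map, ← G.δ.naturality,
    reassoc_of% w.map_η_comp_map_ψ_comp_ψ_comp_map_μ A]
end

section
/- Let (T, C, ψ) be a weak entwining structure on a category 𝒞. For every object A of 𝒞 define e_A := C(μ_A) ∘ ψ_{T A} ∘ η_{C T A} : C T A → C T A. Then e_A is idempotent: e_A ∘ e_A = e_A. (These are the components of the canonical idempotent 2-cell associated to the 1-cell (c,ψ) : t → t of Mnd^ι, at free T-algebras.) -/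
open CategoryTheory

namespace WeakEntwining

variable {𝒞 : Type*} [Category 𝒞] {T : Monad 𝒞} {G : Comonad 𝒞} (w : WeakEntwining T G)

/-- At the free algebra `(T A, μ_A)` this is the `e_A` of the statement. -/
def canonicalIdempotent (X : T.Algebra) : G.obj X.A ⟶ G.obj X.A :=
  T.η.app (G.obj X.A) ≫ w.ψ.app X.A ≫ G.map X.a

lemma map_comp_unit_comp_ψ {X Y : 𝒞} (f : X ⟶ Y) :
    G.map f ≫ T.η.app (G.obj Y) ≫ w.ψ.app Y =
      T.η.app (G.obj X) ≫ w.ψ.app X ≫ G.map (T.map f) := by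
  have unit_natural := T.η.naturality (G.map f)
  have ψ_natural := w.ψ.naturality f
  dsimp at unit_natural ψ_natural
  rw [← Category.assoc, unit_natural, Category.assoc, ψ_natural]

/-- `ψ_A` is fixed by the canonical idempotent of the free algebra on `A`. Moving `η` past `ψ_A`
makes (W1) applicable; the unit law `η ≫ μ = 𝟙` then finishes. -/
lemma ψ_comp_unit_comp_ψ_comp_map_μ (A : 𝒞) :
    w.ψ.app A ≫ T.η.app (G.obj (T.obj A)) ≫ w.ψ.app (T.obj A) ≫ G.map (T.μ.app A) =
      w.ψ.app A := by
  have unit_natural : w.ψ.app A ≫ T.η.app (G.obj (T.obj A)) =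
      T.η.app (T.obj (G.obj A)) ≫ T.map (w.ψ.app A) := T.η.naturality (w.ψ.app A)
  rw [← Category.assoc, unit_natural, Category.assoc, ← w.w1, ← Category.assoc,
    T.left_unit]
  exact Category.id_comp _

theorem canonicalIdempotent_comp_self (X : T.Algebra) :
    w.canonicalIdempotent X ≫ w.canonicalIdempotent X = w.canonicalIdempotent X := by
  have map_assoc : G.map (T.map X.a) ≫ G.map X.a = G.map (T.μ.app X.A) ≫ G.map X.a := by
    simp only [← G.map_comp, X.assoc]
  calc w.canonicalIdempotent X ≫ w.canonicalIdempotent X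
      = T.η.app (G.obj X.A) ≫ w.ψ.app X.A ≫
          (G.map X.a ≫ T.η.app (G.obj X.A) ≫ w.ψ.app X.A) ≫ G.map X.a := by
        simp only [canonicalIdempotent, Category.assoc]
    _ = T.η.app (G.obj X.A) ≫ (w.ψ.app X.A ≫ T.η.app (G.obj (T.obj X.A)) ≫
          w.ψ.app (T.obj X.A) ≫ G.map (T.μ.app X.A)) ≫ G.map X.a := by
        rw [map_comp_unit_comp_ψ]
        simp only [Category.assoc, map_assoc]
    _ = w.canonicalIdempotent X := by
        rw [ψ_comp_unit_comp_ψ_comp_map_μ, canonicalIdempotent]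

end WeakEntwining

/-- The canonical endomorphism `e_A := C(μ_A) ∘ ψ_{T A} ∘ η_{C T A}` of `C T A` is
idempotent: `e_A ∘ e_A = e_A`. -/
theorem weakEntwining_canonical_idempotent {𝒞 : Type*} [Category 𝒞] (T : Monad 𝒞)
    (G : Comonad 𝒞) (w : WeakEntwining T G) (A : 𝒞) :
    (T.η.app (G.obj (T.obj A)) ≫ w.ψ.app (T.obj A) ≫ G.map (T.μ.app A)) ≫
        (T.η.app (G.obj (T.obj A)) ≫ w.ψ.app (T.obj A) ≫ G.map (T.μ.app A)) =
      T.η.app (G.obj (T.obj A)) ≫ w.ψ.app (T.obj A) ≫ G.map (T.μ.app A) :=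
  w.canonicalIdempotent_comp_self (T.free.obj A)
end

section
/- Let (T, C, ψ) be a weak entwining structure on a category 𝒞. For every object A of 𝒞 define e*_A := ε_{T C A} ∘ ψ_{C A} ∘ T(δ_A) : T C A → T C A. Then e*_A is idempotent: e*_A ∘ e*_A = e*_A. (These are the components of the canonical idempotent 2-cell associated to the 1-cell (t,ψ) : c → c of Cmd^π, at cofree C-comodules.) -/
/-!
By (W2) and coassociativity of `δ`, the map `κ := ψ_{C A} ∘ T(δ_A) : T C A → C T C A` is a
coassociative, though in general not counital, `C`-coaction: `δ ∘ κ = C(κ) ∘ κ`. For any such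
coaction `κ : X → C X` the endomorphism `ε_X ∘ κ` is idempotent, by naturality of `ε` and the
counit law `ε_{C X} ∘ δ_X = 1`; and `e*_A = ε ∘ κ`.
-/

open CategoryTheory

namespace CategoryTheory.Comonad

variable {𝒞 : Type*} [Category 𝒞] (G : Comonad 𝒞)

theorem comp_counit_idempotent_of_coassoc {X : 𝒞} (f : X ⟶ G.obj X)
    (hf : f ≫ G.δ.app X = f ≫ G.map f) :
    (f ≫ G.ε.app X) ≫ (f ≫ G.ε.app X) = f ≫ G.ε.app X :=
  calc (f ≫ G.ε.app X) ≫ (f ≫ G.ε.app X)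
      = f ≫ G.map f ≫ G.ε.app (G.obj X) ≫ G.ε.app X := by
        simpa only [Category.assoc, Functor.id_map] using
          congrArg (f ≫ · ≫ G.ε.app X) (G.ε.naturality f).symm
    _ = f ≫ G.δ.app X ≫ G.ε.app (G.obj X) ≫ G.ε.app X := by rw [reassoc_of% hf]
    _ = f ≫ G.ε.app X := by rw [Comonad.left_counit_assoc]

end CategoryTheory.Comonad

namespace WeakEntwining

variable {𝒞 : Type*} [Category 𝒞] {T : Monad 𝒞} {G : Comonad 𝒞} (w : WeakEntwining T G)

theorem map_δ_comp_ψ_coassoc (A : 𝒞) :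
    (T.map (G.δ.app A) ≫ w.ψ.app (G.obj A)) ≫ G.δ.app (T.obj (G.obj A)) =
      (T.map (G.δ.app A) ≫ w.ψ.app (G.obj A)) ≫
        G.map (T.map (G.δ.app A) ≫ w.ψ.app (G.obj A)) :=
  calc (T.map (G.δ.app A) ≫ w.ψ.app (G.obj A)) ≫ G.δ.app (T.obj (G.obj A))
      = T.map (G.δ.app A ≫ G.δ.app (G.obj A)) ≫ w.ψ.app (G.obj (G.obj A)) ≫
          G.map (w.ψ.app (G.obj A)) := by
        rw [Category.assoc, w.w2, Functor.map_comp_assoc]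
    _ = T.map (G.δ.app A ≫ G.map (G.δ.app A)) ≫ w.ψ.app (G.obj (G.obj A)) ≫
          G.map (w.ψ.app (G.obj A)) := by rw [Comonad.coassoc]
    _ = (T.map (G.δ.app A) ≫ w.ψ.app (G.obj A)) ≫
          G.map (T.map (G.δ.app A) ≫ w.ψ.app (G.obj A)) := by
        simp only [Functor.map_comp, Category.assoc]
        simpa only [Functor.comp_map, Functor.comp_obj, Category.assoc] using
          congrArg (T.map (G.δ.app A) ≫ · ≫ G.map (w.ψ.app (G.obj A)))
            (w.ψ.naturality (G.δ.app A))

end WeakEntwining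

/-- The canonical endomorphism `e*_A := ε_{T C A} ∘ ψ_{C A} ∘ T(δ_A)` of `T C A` is
idempotent: `e*_A ∘ e*_A = e*_A`. -/
theorem weakEntwining_canonical_coidempotent {𝒞 : Type*} [Category 𝒞] (T : Monad 𝒞)
    (G : Comonad 𝒞) (w : WeakEntwining T G) (A : 𝒞) :
    (T.map (G.δ.app A) ≫ w.ψ.app (G.obj A) ≫ G.ε.app (T.obj (G.obj A))) ≫
        (T.map (G.δ.app A) ≫ w.ψ.app (G.obj A) ≫ G.ε.app (T.obj (G.obj A))) =
      T.map (G.δ.app A) ≫ w.ψ.app (G.obj A) ≫ G.ε.app (T.obj (G.obj A)) := by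
  simpa only [Category.assoc] using
    G.comp_counit_idempotent_of_coassoc _ (w.map_δ_comp_ψ_coassoc A)
end

section
/- Let (T, μ, η) be a monad on a category 𝒞, (T', μ', η') a monad on a category 𝒟, V : 𝒞 → 𝒟 a functor, and ψ : T' ∘ V ⟶ V ∘ T a natural transformation (components ψ_A : T'(V A) → V(T A)) satisfying V(μ_A) ∘ ψ_{T A} ∘ T'(ψ_A) = ψ_A ∘ μ'_{V A} for every object A of 𝒞 (i.e. (V, ψ) is a 1-cell in the 2-category Mnd^ι). Then for every T-algebra (A, a : T A → A) the endomorphism V(a) ∘ ψ_A ∘ η'_{V A} of V A is idempotent. -/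
open CategoryTheory

/-! The composite `ψ_A ≫ V(a)` is an associative, though possibly non-unital, action of `T'`
on `V A`, and for any such action `b` the composite `η' ≫ b` is idempotent: by naturality of
`η'` its square is `η' ≫ η' ≫ T'(b) ≫ b = η' ≫ (η' ≫ μ') ≫ b`, and `η' ≫ μ' = 𝟙` is a unit
law of the monad `T'`. -/

namespace CategoryTheory.Monad

theorem unit_comp_idempotent_of_map_comp {𝒞 : Type*} [Category 𝒞] (T : Monad 𝒞) {X : 𝒞}
    (b : T.obj X ⟶ X) (hb : T.map b ≫ b = T.μ.app X ≫ b) :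
    (T.η.app X ≫ b) ≫ (T.η.app X ≫ b) = T.η.app X ≫ b := by
  have hη : b ≫ T.η.app X = T.η.app (T.obj X) ≫ T.map b := T.η.naturality b
  calc (T.η.app X ≫ b) ≫ (T.η.app X ≫ b)
      = T.η.app X ≫ T.η.app (T.obj X) ≫ T.map b ≫ b := by
        simp only [Category.assoc, reassoc_of% hη]
    _ = T.η.app X ≫ (T.η.app (T.obj X) ≫ T.μ.app X) ≫ b := by rw [hb, Category.assoc]
    _ = T.η.app X ≫ b := by rw [T.left_unit]; exact congrArg _ (Category.id_comp b)

theorem map_comp_of_mul_compatible {𝒞 : Type*} [Category 𝒞] {𝒟 : Type*} [Category 𝒟]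
    {T : Monad 𝒞} {T' : Monad 𝒟} {V : 𝒞 ⥤ 𝒟}
    {ψ : (V ⋙ T'.toFunctor : 𝒞 ⥤ 𝒟) ⟶ (T.toFunctor ⋙ V : 𝒞 ⥤ 𝒟)}
    (hψ : ∀ A : 𝒞, T'.μ.app (V.obj A) ≫ ψ.app A =
      T'.map (ψ.app A) ≫ ψ.app (T.obj A) ≫ V.map (T.μ.app A))
    {A : 𝒞} {a : T.obj A ⟶ A} (ha : T.map a ≫ a = T.μ.app A ≫ a) :
    T'.map (ψ.app A ≫ V.map a) ≫ ψ.app A ≫ V.map a =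
      T'.μ.app (V.obj A) ≫ ψ.app A ≫ V.map a := by
  have hnat : T'.map (V.map a) ≫ ψ.app A = ψ.app (T.obj A) ≫ V.map (T.map a) :=
    ψ.naturality a
  calc T'.map (ψ.app A ≫ V.map a) ≫ ψ.app A ≫ V.map a
      = T'.map (ψ.app A) ≫ ψ.app (T.obj A) ≫ V.map (T.map a ≫ a) := by
        simp only [Functor.map_comp, Category.assoc, reassoc_of% hnat]
    _ = T'.μ.app (V.obj A) ≫ ψ.app A ≫ V.map a := by
        rw [ha, Functor.map_comp, reassoc_of% hψ A]

end CategoryTheory.Monad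

theorem mndIota_one_cell_idempotent_general {𝒞 : Type*} [Category 𝒞] {𝒟 : Type*} [Category 𝒟]
    (T : Monad 𝒞) (T' : Monad 𝒟) (V : 𝒞 ⥤ 𝒟)
    (ψ : (V ⋙ T'.toFunctor : 𝒞 ⥤ 𝒟) ⟶ (T.toFunctor ⋙ V : 𝒞 ⥤ 𝒟))
    (hψ : ∀ A : 𝒞, T'.μ.app (V.obj A) ≫ ψ.app A =
      T'.map (ψ.app A) ≫ ψ.app (T.obj A) ≫ V.map (T.μ.app A))
    (A : 𝒞) (a : T.obj A ⟶ A)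
    (h_assoc : T.map a ≫ a = T.μ.app A ≫ a) :
    (T'.η.app (V.obj A) ≫ ψ.app A ≫ V.map a) ≫ (T'.η.app (V.obj A) ≫ ψ.app A ≫ V.map a) =
      T'.η.app (V.obj A) ≫ ψ.app A ≫ V.map a :=
  T'.unit_comp_idempotent_of_map_comp _ (Monad.map_comp_of_mul_compatible hψ h_assoc)

/-- Let `(V, ψ)` be a 1-cell `T ⟶ T'` in the extended 2-category `Mnd^ι` of monads: a
functor `V : 𝒞 ⥤ 𝒟` together with a natural transformation `ψ : T' ∘ V ⟶ V ∘ T`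
compatible with the multiplications (but not necessarily with the units). Then for every
`T`-algebra `(A, a)` the endomorphism `V(a) ∘ ψ_A ∘ η'_{V A}` of `V A` is idempotent. -/
theorem mndIota_one_cell_idempotent {𝒞 : Type*} [Category 𝒞] {𝒟 : Type*} [Category 𝒟]
    (T : Monad 𝒞) (T' : Monad 𝒟) (V : 𝒞 ⥤ 𝒟)
    (ψ : (V ⋙ T'.toFunctor : 𝒞 ⥤ 𝒟) ⟶ (T.toFunctor ⋙ V : 𝒞 ⥤ 𝒟))
    (hψ : ∀ A : 𝒞, T'.μ.app (V.obj A) ≫ ψ.app A =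
      T'.map (ψ.app A) ≫ ψ.app (T.obj A) ≫ V.map (T.μ.app A))
    (A : 𝒞) (a : T.obj A ⟶ A)
    (h_unit : T.η.app A ≫ a = 𝟙 A) (h_assoc : T.map a ≫ a = T.μ.app A ≫ a) :
    (T'.η.app (V.obj A) ≫ ψ.app A ≫ V.map a) ≫ (T'.η.app (V.obj A) ≫ ψ.app A ≫ V.map a) =
      T'.η.app (V.obj A) ≫ ψ.app A ≫ V.map a :=
  mndIota_one_cell_idempotent_general T T' V ψ hψ A a h_assoc
end

section
/- Let (C, δ, ε) be a comonad on a category 𝒞, (C', δ', ε') a comonad on a category 𝒟, V : 𝒞 → 𝒟 a functor, and φ : V ∘ C ⟶ C' ∘ V a natural transformation (components φ_A : V(C A) → C'(V A)) satisfying C'(φ_A) ∘ φ_{C A} ∘ V(δ_A) = δ'_{V A} ∘ φ_A for every object A of 𝒞 (i.e. (V, φ) is a 1-cell in the 2-category Cmd^π). Then for every C-comodule (A, k : A → C A) the endomorphism ε'_{V A} ∘ φ_A ∘ V(k) of V A is idempotent. -/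
/-!
Put `ψ := ε'_V ∘ φ : V ∘ C ⟶ V`. Naturality of `ε'`, the compatibility of `φ` with the
comultiplications and the counit law `ε'_{C'} ∘ δ' = 1` give `ψ_A ∘ ψ_{C A} ∘ V(δ_A) = ψ_A`.
For a coassociative `k`, naturality of `ψ` turns `(ψ_A ∘ V k) ∘ (ψ_A ∘ V k)` into
`ψ_A ∘ ψ_{C A} ∘ V(C k ∘ k) = ψ_A ∘ ψ_{C A} ∘ V(δ_A) ∘ V k = ψ_A ∘ V k`.
-/

open CategoryTheory

namespace CategoryTheory.Comonad

variable {𝒞 : Type*} [Category 𝒞] {𝒟 : Type*} [Category 𝒟]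

theorem map_comp_app_idempotent (G : Comonad 𝒞) {V : 𝒞 ⥤ 𝒟} (ψ : G.toFunctor ⋙ V ⟶ V)
    (hψ : ∀ A : 𝒞, V.map (G.δ.app A) ≫ ψ.app (G.obj A) ≫ ψ.app A = ψ.app A)
    {A : 𝒞} (k : A ⟶ G.obj A) (h_coassoc : k ≫ G.map k = k ≫ G.δ.app A) :
    (V.map k ≫ ψ.app A) ≫ (V.map k ≫ ψ.app A) = V.map k ≫ ψ.app A := by
  have hψk : ψ.app A ≫ V.map k = V.map (G.map k) ≫ ψ.app (G.obj A) := (ψ.naturality k).symm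
  calc (V.map k ≫ ψ.app A) ≫ (V.map k ≫ ψ.app A)
      = V.map (k ≫ G.map k) ≫ ψ.app (G.obj A) ≫ ψ.app A := by
        simp only [Category.assoc, reassoc_of% hψk, Functor.map_comp]
    _ = V.map k ≫ ψ.app A := by
        rw [h_coassoc, Functor.map_comp, Category.assoc, hψ]

def oneCellCounit {G : Comonad 𝒞} {G' : Comonad 𝒟} {V : 𝒞 ⥤ 𝒟}
    (φ : G.toFunctor ⋙ V ⟶ V ⋙ G'.toFunctor) : G.toFunctor ⋙ V ⟶ V :=
  φ ≫ Functor.whiskerLeft V G'.ε ≫ V.rightUnitor.hom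

@[simp]
theorem oneCellCounit_app {G : Comonad 𝒞} {G' : Comonad 𝒟} {V : 𝒞 ⥤ 𝒟}
    (φ : G.toFunctor ⋙ V ⟶ V ⋙ G'.toFunctor) (A : 𝒞) :
    (oneCellCounit φ).app A = φ.app A ≫ G'.ε.app (V.obj A) := by
  simp [oneCellCounit]

theorem map_δ_comp_oneCellCounit {G : Comonad 𝒞} {G' : Comonad 𝒟} {V : 𝒞 ⥤ 𝒟}
    (φ : G.toFunctor ⋙ V ⟶ V ⋙ G'.toFunctor)
    (hφ : ∀ A : 𝒞, V.map (G.δ.app A) ≫ φ.app (G.obj A) ≫ G'.map (φ.app A) =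
      φ.app A ≫ G'.δ.app (V.obj A)) (A : 𝒞) :
    V.map (G.δ.app A) ≫ (oneCellCounit φ).app (G.obj A) ≫ (oneCellCounit φ).app A =
      (oneCellCounit φ).app A := by
  have hεφ : G'.ε.app (V.obj (G.obj A)) ≫ φ.app A =
      G'.map (φ.app A) ≫ G'.ε.app (G'.obj (V.obj A)) := (G'.ε.naturality (φ.app A)).symm
  simp only [oneCellCounit_app, Category.assoc, reassoc_of% hεφ, reassoc_of% (hφ A),
    Comonad.left_counit_assoc]

end CategoryTheory.Comonad

theorem cmdPi_one_cell_idempotent_general {𝒞 : Type*} [Category 𝒞] {𝒟 : Type*} [Category 𝒟]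
    (G : Comonad 𝒞) (G' : Comonad 𝒟) (V : 𝒞 ⥤ 𝒟)
    (φ : (G.toFunctor ⋙ V : 𝒞 ⥤ 𝒟) ⟶ (V ⋙ G'.toFunctor : 𝒞 ⥤ 𝒟))
    (hφ : ∀ A : 𝒞, V.map (G.δ.app A) ≫ φ.app (G.obj A) ≫ G'.map (φ.app A) =
      φ.app A ≫ G'.δ.app (V.obj A))
    (A : 𝒞) (k : A ⟶ G.obj A)
    (h_coassoc : k ≫ G.map k = k ≫ G.δ.app A) :
    (V.map k ≫ φ.app A ≫ G'.ε.app (V.obj A)) ≫ (V.map k ≫ φ.app A ≫ G'.ε.app (V.obj A)) =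
      V.map k ≫ φ.app A ≫ G'.ε.app (V.obj A) := by
  simpa only [Comonad.oneCellCounit_app] using
    Comonad.map_comp_app_idempotent G (Comonad.oneCellCounit φ)
      (Comonad.map_δ_comp_oneCellCounit φ hφ) k h_coassoc

/-- Let `(V, φ)` be a 1-cell `C ⟶ C'` in the extended 2-category `Cmd^π` of comonads: a
functor `V : 𝒞 ⥤ 𝒟` together with a natural transformation `φ : V ∘ C ⟶ C' ∘ V`
compatible with the comultiplications (but not necessarily with the counits). Then for
every `C`-comodule `(A, k)` the endomorphism `ε'_{V A} ∘ φ_A ∘ V(k)` of `V A` is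
idempotent. -/
theorem cmdPi_one_cell_idempotent {𝒞 : Type*} [Category 𝒞] {𝒟 : Type*} [Category 𝒟]
    (G : Comonad 𝒞) (G' : Comonad 𝒟) (V : 𝒞 ⥤ 𝒟)
    (φ : (G.toFunctor ⋙ V : 𝒞 ⥤ 𝒟) ⟶ (V ⋙ G'.toFunctor : 𝒞 ⥤ 𝒟))
    (hφ : ∀ A : 𝒞, V.map (G.δ.app A) ≫ φ.app (G.obj A) ≫ G'.map (φ.app A) =
      φ.app A ≫ G'.δ.app (V.obj A))
    (A : 𝒞) (k : A ⟶ G.obj A)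
    (h_counit : k ≫ G.ε.app A = 𝟙 A) (h_coassoc : k ≫ G.map k = k ≫ G.δ.app A) :
    (V.map k ≫ φ.app A ≫ G'.ε.app (V.obj A)) ≫ (V.map k ≫ φ.app A ≫ G'.ε.app (V.obj A)) =
      V.map k ≫ φ.app A ≫ G'.ε.app (V.obj A) :=
  cmdPi_one_cell_idempotent_general G G' V φ hφ A k h_coassoc
end

section
/- Let (T, C, ψ) be a weak entwining structure on a category 𝒞, let (A, a : T A → A) be a T-algebra and κ : A → C A a morphism satisfying the entwined-module compatibility C(a) ∘ ψ_A ∘ T(κ) = κ ∘ a. Then C C(a) ∘ C(ψ_A) ∘ ψ_{C A} ∘ η_{C C A} ∘ δ_A ∘ κ = δ_A ∘ κ as morphisms A → C C A. (This is the identity used to prove that coassociativity of the coaction transfers along the canonical idempotent splitting.) -/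
open CategoryTheory

/-! Naturality of `η` and (W2) rewrite `δ ≫ η ≫ ψ ≫ C(ψ)` as `η ≫ ψ ≫ δ`; naturality of `δ` then
moves `C C(a)` to the front of `δ`, and the compatibility of `κ` together with the unit law of
the algebra collapses `κ ≫ η ≫ ψ ≫ C(a)` to `κ`. -/

namespace WeakEntwining

variable {𝒞 : Type*} [Category 𝒞] {T : Monad 𝒞} {G : Comonad 𝒞} (w : WeakEntwining T G)

theorem comul_unit_ψ_map_ψ (A : 𝒞) :
    G.δ.app A ≫ T.η.app (G.obj (G.obj A)) ≫ w.ψ.app (G.obj A) ≫ G.map (w.ψ.app A) =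
      T.η.app (G.obj A) ≫ w.ψ.app A ≫ G.δ.app (T.obj A) := by
  rw [w.w2]
  exact T.η.naturality_assoc _ _

theorem comp_unit_ψ_map_eq_self {A : 𝒞} {a : T.obj A ⟶ A} (h_unit : T.η.app A ≫ a = 𝟙 A)
    {κ : A ⟶ G.obj A} (h_compat : T.map κ ≫ w.ψ.app A ≫ G.map a = a ≫ κ) :
    κ ≫ T.η.app (G.obj A) ≫ w.ψ.app A ≫ G.map a = κ := by
  calc κ ≫ T.η.app (G.obj A) ≫ w.ψ.app A ≫ G.map a
      = T.η.app A ≫ T.map κ ≫ w.ψ.app A ≫ G.map a := T.η.naturality_assoc κ _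
    _ = κ := by rw [h_compat, reassoc_of% h_unit]

end WeakEntwining

theorem weakEntwining_coassoc_transfer_general {𝒞 : Type*} [Category 𝒞] (T : Monad 𝒞)
    (G : Comonad 𝒞) (w : WeakEntwining T G) (A : 𝒞) (a : T.obj A ⟶ A)
    (h_unit : T.η.app A ≫ a = 𝟙 A)
    (κ : A ⟶ G.obj A) (h_compat : T.map κ ≫ w.ψ.app A ≫ G.map a = a ≫ κ) :
    κ ≫ G.δ.app A ≫ T.η.app (G.obj (G.obj A)) ≫ w.ψ.app (G.obj A) ≫
        G.map (w.ψ.app A) ≫ G.map (G.map a) =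
      κ ≫ G.δ.app A := by
  have comul_naturality : G.δ.app (T.obj A) ≫ G.map (G.map a) = G.map a ≫ G.δ.app A :=
    (G.δ.naturality a).symm
  rw [reassoc_of% w.comul_unit_ψ_map_ψ A, comul_naturality,
    reassoc_of% w.comp_unit_ψ_map_eq_self h_unit h_compat]

/-- If `(A, a)` is a `T`-algebra and `κ : A ⟶ C A` satisfies the entwined-module
compatibility `C(a) ∘ ψ_A ∘ T(κ) = κ ∘ a`, then
`C C(a) ∘ C(ψ_A) ∘ ψ_{C A} ∘ η_{C C A} ∘ δ_A ∘ κ = δ_A ∘ κ` as morphisms `A ⟶ C C A`. -/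
theorem weakEntwining_coassoc_transfer {𝒞 : Type*} [Category 𝒞] (T : Monad 𝒞)
    (G : Comonad 𝒞) (w : WeakEntwining T G) (A : 𝒞) (a : T.obj A ⟶ A)
    (h_unit : T.η.app A ≫ a = 𝟙 A) (h_assoc : T.map a ≫ a = T.μ.app A ≫ a)
    (κ : A ⟶ G.obj A) (h_compat : T.map κ ≫ w.ψ.app A ≫ G.map a = a ≫ κ) :
    κ ≫ G.δ.app A ≫ T.η.app (G.obj (G.obj A)) ≫ w.ψ.app (G.obj A) ≫
        G.map (w.ψ.app A) ≫ G.map (G.map a) =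
      κ ≫ G.δ.app A :=
  weakEntwining_coassoc_transfer_general T G w A a h_unit κ h_compat
end

section
/- Let (T, C, ψ) be a weak entwining structure on a category 𝒞, let (A, a) and (A', a') be T-algebras, let κ : A → C A satisfy the entwined-module compatibility C(a) ∘ ψ_A ∘ T(κ) = κ ∘ a, and let f : A → A' be a morphism of T-algebras (i.e. a' ∘ T(f) = f ∘ a). Then C(a') ∘ ψ_{A'} ∘ η_{C A'} ∘ C(f) ∘ κ = C(f) ∘ κ as morphisms A → C A'. (This is the identity used to prove that morphisms of weak entwined modules correspond to comodule morphisms over the weakly lifted comonad.) -/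
open CategoryTheory

namespace WeakEntwining

variable {𝒞 : Type*} [Category 𝒞] {T : Monad 𝒞} {G : Comonad 𝒞} (w : WeakEntwining T G)

/-- The endomorphism `C(a) ∘ ψ_A ∘ η_{C A}` of `C A`; it is idempotent by (W1) when `a` is an
associative action, and its image is the weakly lifted comonad at `(A, a)`. -/
def idempotent {A : 𝒞} (a : T.obj A ⟶ A) : G.obj A ⟶ G.obj A :=
  T.η.app (G.obj A) ≫ w.ψ.app A ≫ G.map a

theorem map_comp_idempotent {A A' : 𝒞} {a : T.obj A ⟶ A} {a' : T.obj A' ⟶ A'} {f : A ⟶ A'}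
    (hf : T.map f ≫ a' = a ≫ f) :
    G.map f ≫ w.idempotent a' = w.idempotent a ≫ G.map f := by
  have hη : G.map f ≫ T.η.app (G.obj A') = T.η.app (G.obj A) ≫ T.map (G.map f) := by
    simpa using T.η.naturality (G.map f)
  have hψ : T.map (G.map f) ≫ w.ψ.app A' = w.ψ.app A ≫ G.map (T.map f) := w.ψ.naturality f
  rw [idempotent, idempotent, reassoc_of% hη, reassoc_of% hψ, ← G.map_comp, hf, G.map_comp]
  simp only [Category.assoc]

theorem comp_idempotent_of_compat {A : 𝒞} {a : T.obj A ⟶ A} (h_unit : T.η.app A ≫ a = 𝟙 A)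
    {κ : A ⟶ G.obj A} (h_compat : T.map κ ≫ w.ψ.app A ≫ G.map a = a ≫ κ) :
    κ ≫ w.idempotent a = κ := by
  have hη : κ ≫ T.η.app (G.obj A) = T.η.app A ≫ T.map κ := by simpa using T.η.naturality κ
  rw [idempotent, reassoc_of% hη, h_compat, reassoc_of% h_unit]

end WeakEntwining

theorem weakEntwining_morphism_through_idempotent_general {𝒞 : Type*} [Category 𝒞] (T : Monad 𝒞)
    (G : Comonad 𝒞) (w : WeakEntwining T G) (A A' : 𝒞) (a : T.obj A ⟶ A)
    (h_unit : T.η.app A ≫ a = 𝟙 A)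
    (a' : T.obj A' ⟶ A')
    (κ : A ⟶ G.obj A) (h_compat : T.map κ ≫ w.ψ.app A ≫ G.map a = a ≫ κ)
    (f : A ⟶ A') (hf : T.map f ≫ a' = a ≫ f) :
    κ ≫ G.map f ≫ T.η.app (G.obj A') ≫ w.ψ.app A' ≫ G.map a' = κ ≫ G.map f := calc
  κ ≫ G.map f ≫ w.idempotent a' = (κ ≫ w.idempotent a) ≫ G.map f := by
    rw [w.map_comp_idempotent hf, Category.assoc]
  _ = κ ≫ G.map f := by rw [w.comp_idempotent_of_compat h_unit h_compat]

/-- If `(A, a)` and `(A', a')` are `T`-algebras, `κ : A ⟶ C A` satisfies the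
entwined-module compatibility `C(a) ∘ ψ_A ∘ T(κ) = κ ∘ a`, and `f : A ⟶ A'` is a morphism
of `T`-algebras, then `C(a') ∘ ψ_{A'} ∘ η_{C A'} ∘ C(f) ∘ κ = C(f) ∘ κ` as morphisms
`A ⟶ C A'`. -/
theorem weakEntwining_morphism_through_idempotent {𝒞 : Type*} [Category 𝒞] (T : Monad 𝒞)
    (G : Comonad 𝒞) (w : WeakEntwining T G) (A A' : 𝒞) (a : T.obj A ⟶ A)
    (h_unit : T.η.app A ≫ a = 𝟙 A) (h_assoc : T.map a ≫ a = T.μ.app A ≫ a)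
    (a' : T.obj A' ⟶ A')
    (h_unit' : T.η.app A' ≫ a' = 𝟙 A') (h_assoc' : T.map a' ≫ a' = T.μ.app A' ≫ a')
    (κ : A ⟶ G.obj A) (h_compat : T.map κ ≫ w.ψ.app A ≫ G.map a = a ≫ κ)
    (f : A ⟶ A') (hf : T.map f ≫ a' = a ≫ f) :
    κ ≫ G.map f ≫ T.η.app (G.obj A') ≫ w.ψ.app A' ≫ G.map a' = κ ≫ G.map f :=
  weakEntwining_morphism_through_idempotent_general T G w A A' a h_unit a' κ h_compat f hf
end
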